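/- arXiv:2005.07944 — 6 statements merged into one kernel-verified Lean document; each statement's English description precedes it below -/
import Mathlib

section
/- For even m = 2n and indices i, j with 0 ≤ j ≤ i ≤ n and i ≡ j (mod 2), the quantity C(i,j)·C(2n−i,j)·j!·(i−j−1)!!·(2n−i−j−1)!! equals (2n−1)!!·C(2n,i)⁻¹·2^j·C(n,j)·C(n−j,(i−j)/2), where x!! denotes the double factorial with (−1)!! = 1. -/
open Nat


lemma fac2 (k : ℕ) : (2*k)! = 2^k * k ! * (2*k-1)‼ := by
  cases k with
  | zero => rfl
  | succ m =>
    have h : 2*(m+1) = (2*m+1)+1 := by ring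
    rw [h, factorial_eq_mul_doubleFactorial, show 2*m+1+1 = 2*(m+1) from by ring,
      doubleFactorial_two_mul]
    congr 2

lemma dfq (k : ℕ) : ((2*k-1)‼ : ℚ) = (2*k)! / (2^k * k !) := by
  have h : ((2*k)! : ℚ) = 2^k * k ! * (2*k-1)‼ := by exact_mod_cast fac2 k
  rw [h]
  field_simp

/-- even case `m = 2n` entry identity for the winding matrix `A_m`.
Note: natural subtraction conveniently implements the convention `(-1)!! = 1`,
since when `i = j` we have `i - j - 1 = 0` and `0‼ = 1`. -/
theorem stmt_0 (n i j : ℕ) (hj : j ≤ i) (hi : i ≤ n) (hpar : i % 2 = j % 2) :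
    ((i.choose j : ℚ) * ((2 * n - i).choose j) * (j !) *
        ((i - j - 1)‼) * ((2 * n - i - j - 1)‼)) =
      ((2 * n - 1)‼ : ℚ) * ((2 * n).choose i : ℚ)⁻¹ * 2 ^ j *
        (n.choose j) * ((n - j).choose ((i - j) / 2)) := by
  obtain ⟨k, rfl⟩ : ∃ k, i = j + 2*k := ⟨(i-j)/2, by omega⟩
  obtain ⟨d, rfl⟩ : ∃ d, n = j + k + d := ⟨n - (j+k), by omega⟩
  have e1 : j + 2*k - j - 1 = 2*k - 1 := by omega
  have e2 : 2*(j+k+d) - (j+2*k) = j + 2*d := by omega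
  have e3 : j + 2*d - j - 1 = 2*d - 1 := by omega
  have e4 : 2*(j+k+d) - 1 = 2*(j+k+d) - 1 := rfl
  have e5 : (j+2*k-j)/2 = k := by omega
  have e6 : j+k+d-j = k+d := by omega
  rw [e1, e2, e3, e5, e6]
  rw [Nat.cast_choose ℚ (by omega : j ≤ j + 2*k),
      Nat.cast_choose ℚ (by omega : j ≤ j + 2*d),
      Nat.cast_choose ℚ (by omega : j + 2*k ≤ 2*(j+k+d)),
      Nat.cast_choose ℚ (by omega : j ≤ j+k+d),
      Nat.cast_choose ℚ (by omega : k ≤ k+d),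
      dfq k, dfq d, show (2*(j+k+d)-1)‼ = (2*(j+k+d)-1)‼ from rfl, dfq (j+k+d)]
  have s1 : j + 2*k - j = 2*k := by omega
  have s2 : j + 2*d - j = 2*d := by omega
  have s3 : 2*(j+k+d) - (j+2*k) = j+2*d := by omega
  have s4 : j+k+d-j = k+d := by omega
  have s5 : k+d-k = d := by omega
  rw [s1, s2, s3, s4, s5]
  have f1 : ((2*k)! : ℚ) ≠ 0 := by positivity
  have f2 : ((2*d)! : ℚ) ≠ 0 := by positivity
  have f3 : ((j+2*k)! : ℚ) ≠ 0 := by positivity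
  have f4 : ((j+2*d)! : ℚ) ≠ 0 := by positivity
  have f5 : ((j ! : ℕ) : ℚ) ≠ 0 := by positivity
  have f6 : ((k ! : ℕ) : ℚ) ≠ 0 := by positivity
  have f7 : ((d ! : ℕ) : ℚ) ≠ 0 := by positivity
  have f8 : (((k+d)! : ℕ) : ℚ) ≠ 0 := by positivity
  have f9 : (((j+k+d))! : ℚ) ≠ 0 := by positivity
  have f10 : ((2*(j+k+d))! : ℚ) ≠ 0 := by positivity
  field_simp
  ring
end

section
/- For odd m = 2n+1 and indices 0 ≤ j ≤ i ≤ n, the expression defined as C(i,j)·C(2n+1−i,j)·j!·(i−j−1)!!·(2n+1−i−j)!! when i ≡ j (mod 2), and C(i,j)·C(2n+1−i,j)·j!·(i−j)!!·(2n−i−j)!! otherwise, equals (2n+1)!!·C(2n+1,i)⁻¹·2^j·C(n,j)·C(n−j,⌊(i−j)/2⌋). -/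
open Nat

lemma dfA (s : ℕ) : ((2 * s - 1)‼ : ℚ) * (2 ^ s * s !) = (2 * s)! := by
  cases s with
  | zero => norm_num
  | succ s =>
    have h0 : 2 * (s + 1) - 1 = 2 * s + 1 := by omega
    have h1 : 2 * (s + 1) = (2 * s + 1) + 1 := by ring
    rw [h0, h1, Nat.factorial_eq_mul_doubleFactorial (2 * s + 1)]
    have h2 : ((2 * s + 1) + 1)‼ = 2 ^ (s + 1) * (s + 1)! := by
      rw [show (2 * s + 1) + 1 = 2 * (s + 1) from by ring, Nat.doubleFactorial_two_mul]
    rw [h2]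
    push_cast
    ring

lemma dfB (u : ℕ) : ((2 * u + 1)‼ : ℚ) * (2 ^ u * u !) = (2 * u + 1)! := by
  rw [Nat.factorial_eq_mul_doubleFactorial, Nat.doubleFactorial_two_mul]
  push_cast
  ring

/-- odd case `m = 2n+1` entry identity for the winding matrix `A_m`. -/
theorem stmt_1 (n i j : ℕ) (hj : j ≤ i) (hi : i ≤ n) :
    (if i % 2 = j % 2 then
        ((i.choose j : ℚ) * ((2 * n + 1 - i).choose j) * (j !) *
          ((i - j - 1)‼) * ((2 * n + 1 - i - j)‼))
      else
        ((i.choose j : ℚ) * ((2 * n + 1 - i).choose j) * (j !) *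
          ((i - j)‼) * ((2 * n - i - j)‼))) =
      ((2 * n + 1)‼ : ℚ) * ((2 * n + 1).choose i : ℚ)⁻¹ * 2 ^ j *
        (n.choose j) * ((n - j).choose ((i - j) / 2)) := by
  have hN : ((2 * n + 1)‼ : ℚ) = (2 * n + 1)! / (2 ^ n * n !) := by
    rw [eq_div_iff (by positivity), dfB]
  have hfj : (j ! : ℚ) ≠ 0 := by positivity
  rcases Nat.even_or_odd (i - j) with ⟨s, hs⟩ | ⟨s, hs⟩
  · -- even case
    obtain ⟨u, hu⟩ : ∃ u, n = j + s + u := ⟨n - j - s, by omega⟩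
    have hij : i = j + 2 * s := by omega
    subst hij hu
    rw [if_pos (by omega)]
    have e1 : 2 * (j + s + u) + 1 - (j + 2 * s) = 2 * u + 1 + j := by omega
    have e2 : j + 2 * s - j - 1 = 2 * s - 1 := by omega
    have e3 : 2 * (j + s + u) + 1 - (j + 2 * s) - j = 2 * u + 1 := by omega
    have e4 : j + s + u - j = s + u := by omega
    have e5 : (j + 2 * s - j) / 2 = s := by omega
    rw [e2, e3, e1, e4, e5]
    have hA : ((2 * s - 1)‼ : ℚ) = (2 * s)! / (2 ^ s * s !) := by
      rw [eq_div_iff (by positivity), dfA]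
    have hB : ((2 * u + 1)‼ : ℚ) = (2 * u + 1)! / (2 ^ u * u !) := by
      rw [eq_div_iff (by positivity), dfB]
    rw [hA, hB, hN,
      Nat.cast_choose ℚ (show j ≤ j + 2 * s by omega),
      Nat.cast_choose ℚ (show j ≤ 2 * u + 1 + j by omega),
      Nat.cast_choose ℚ (show j + 2 * s ≤ 2 * (j + s + u) + 1 by omega),
      Nat.cast_choose ℚ (show j ≤ j + s + u by omega),
      Nat.cast_choose ℚ (show s ≤ s + u by omega)]
    rw [show j + 2 * s - j = 2 * s from by omega,
      show 2 * u + 1 + j - j = 2 * u + 1 from by omega,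
      show 2 * (j + s + u) + 1 - (j + 2 * s) = 2 * u + 1 + j from by omega,
      show j + s + u - j = s + u from by omega,
      show s + u - s = u from by omega]
    have h1 : ((2 * s)! : ℚ) ≠ 0 := by positivity
    have h2 : ((2 * u + 1)! : ℚ) ≠ 0 := by positivity
    have h3 : ((j + 2 * s)! : ℚ) ≠ 0 := by positivity
    have h4 : ((2 * u + 1 + j)! : ℚ) ≠ 0 := by positivity
    have h5 : ((2 * (j + s + u) + 1)! : ℚ) ≠ 0 := by positivity
    have h6 : ((j + s + u)! : ℚ) ≠ 0 := by positivity
    have h7 : ((s + u)! : ℚ) ≠ 0 := by positivity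
    have h8 : (s ! : ℚ) ≠ 0 := by positivity
    have h9 : (u ! : ℚ) ≠ 0 := by positivity
    field_simp
    ring
  · -- odd case
    obtain ⟨u, hu⟩ : ∃ u, n = j + s + u + 1 := ⟨n - j - s - 1, by omega⟩
    have hij : i = j + 2 * s + 1 := by omega
    subst hij hu
    rw [if_neg (by omega)]
    rw [show j + 2 * s + 1 - j = 2 * s + 1 from by omega,
      show 2 * (j + s + u + 1) + 1 - (j + 2 * s + 1) = 2 * u + 2 + j from by omega,
      show 2 * (j + s + u + 1) - (j + 2 * s + 1) - j = 2 * u + 1 from by omega,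
      show j + s + u + 1 - j = s + u + 1 from by omega,
      show (2 * s + 1) / 2 = s from by omega]
    have hA : ((2 * s + 1)‼ : ℚ) = (2 * s + 1)! / (2 ^ s * s !) := by
      rw [eq_div_iff (by positivity), dfB]
    have hB : ((2 * u + 1)‼ : ℚ) = (2 * u + 1)! / (2 ^ u * u !) := by
      rw [eq_div_iff (by positivity), dfB]
    rw [hA, hB, hN,
      Nat.cast_choose ℚ (show j ≤ j + 2 * s + 1 by omega),
      Nat.cast_choose ℚ (show j ≤ 2 * u + 2 + j by omega),
      Nat.cast_choose ℚ (show j + 2 * s + 1 ≤ 2 * (j + s + u + 1) + 1 by omega),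
      Nat.cast_choose ℚ (show j ≤ j + s + u + 1 by omega),
      Nat.cast_choose ℚ (show s ≤ s + u + 1 by omega)]
    rw [show j + 2 * s + 1 - j = 2 * s + 1 from by omega,
      show 2 * u + 2 + j - j = 2 * u + 2 from by omega,
      show 2 * (j + s + u + 1) + 1 - (j + 2 * s + 1) = 2 * u + 2 + j from by omega,
      show j + s + u + 1 - j = s + u + 1 from by omega,
      show s + u + 1 - s = u + 1 from by omega]
    have f1 : ((2 * u + 2)! : ℚ) = (2 * u + 2) * (2 * u + 1)! := by
      rw [show 2 * u + 2 = (2 * u + 1) + 1 from rfl, Nat.factorial_succ]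
      push_cast; ring
    have f2 : ((u + 1)! : ℚ) = (u + 1) * u ! := by
      rw [Nat.factorial_succ]; push_cast; ring
    rw [f1, f2]
    have h1 : ((2 * s + 1)! : ℚ) ≠ 0 := by positivity
    have h2 : ((2 * u + 1)! : ℚ) ≠ 0 := by positivity
    have h3 : ((j + 2 * s + 1)! : ℚ) ≠ 0 := by positivity
    have h4 : ((2 * u + 2 + j)! : ℚ) ≠ 0 := by positivity
    have h5 : ((2 * (j + s + u + 1) + 1)! : ℚ) ≠ 0 := by positivity
    have h6 : ((j + s + u + 1)! : ℚ) ≠ 0 := by positivity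
    have h7 : ((s + u + 1)! : ℚ) ≠ 0 := by positivity
    have h8 : (s ! : ℚ) ≠ 0 := by positivity
    have h9 : (u ! : ℚ) ≠ 0 := by positivity
    field_simp
    ring
end

section
/- For even m = 2n and any 0 ≤ i ≤ n, the sum over j from 0 to i of a^{(m)}_{i,j} equals (2n−1)!!, where a^{(m)}_{i,j} = C(i,j)·C(2n−i,j)·j!·(i−j−1)!!·(2n−i−j−1)!! if i ≡ j (mod 2) and 0 otherwise. -/
open Nat


lemma choose_id (m k : ℕ) : (m - k) * m.choose k = m * (m-1).choose k := by
  cases m with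
  | zero => cases k <;> simp
  | succ m =>
    rcases le_or_gt k m with h | h
    · rw [show m + 1 - 1 = m by omega]
      calc (m + 1 - k) * (m+1).choose k = (m+1).choose k * (m + 1 - k) := by ring
        _ = (m+1).choose (k+1) * (k+1) := (Nat.choose_succ_right_eq (m+1) k).symm
        _ = (m+1) * m.choose k := by
            have h2 := Nat.add_one_mul_choose_eq m k
            omega
    · rw [show m + 1 - k = 0 by omega, show m + 1 - 1 = m by omega,
        Nat.choose_eq_zero_of_lt h]
      simp

lemma core (i j : ℕ) (hj : j ≤ i) (hj1 : 1 ≤ j) (hp : i % 2 = j % 2) :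
    i.choose j * (i - j - 1)‼ =
      (i - 1) * (i - 2).choose j * (i - j - 3)‼ + (i - 1).choose (j - 1) * (i - j - 1)‼ := by
  rcases Nat.eq_or_lt_of_le hj with rfl | hlt
  · simp [Nat.choose_eq_zero_of_lt (show j - 2 < j by omega), Nat.sub_self]
  · obtain ⟨d, rfl⟩ : ∃ d, i = j + d + 2 := ⟨i - j - 2, by omega⟩
    obtain ⟨l, rfl⟩ : ∃ l, j = l + 1 := ⟨j - 1, by omega⟩
    have key : (l + 1 + d + 2).choose (l + 1) * (d + 1) =
        (l + 1 + d + 1) * (l + 1 + d).choose (l + 1) + (l + 1 + d + 1).choose l * (d + 1) := by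
      have hp2 : (l + d + 2 + 1).choose (l + 1) = (l + d + 2).choose l + (l + d + 2).choose (l + 1) :=
        Nat.choose_succ_succ' (l + d + 2) l
      have hc : (l + d + 2 - (l + 1)) * (l + d + 2).choose (l + 1)
          = (l + d + 2) * (l + d + 2 - 1).choose (l + 1) := choose_id (l + d + 2) (l + 1)
      simp only [show l + d + 2 - (l+1) = d + 1 by omega, show l + d + 2 - 1 = l + d + 1 by omega] at hc
      rw [show l + 1 + d + 2 = l + d + 2 + 1 by ring, show l + 1 + d + 1 = l + d + 2 by ring,
        show l + 1 + d = l + d + 1 by ring, hp2]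
      nlinarith [hc]
    have key' : (l + 1 + d + 2).choose (l + 1) * (d + 1) =
        (l + d + 2) * (l + d + 1).choose (l + 1) + (l + d + 2).choose l * (d + 1) := by
      rw [show l + d + 1 = l + 1 + d by ring, show l + d + 2 = l + 1 + d + 1 by ring]
      nlinarith [key]
    rw [show l + 1 + d + 2 - (l + 1) - 1 = d + 1 by omega,
      show l + 1 + d + 2 - (l + 1) - 3 = d - 1 by omega,
      show l + 1 + d + 2 - 1 = l + d + 2 by omega,
      show l + 1 + d + 2 - 2 = l + d + 1 by omega,
      show l + 1 - 1 = l by omega, Nat.doubleFactorial_add_one,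
      show (l + 1 + d + 2).choose (l + 1) * ((d + 1) * (d - 1)‼)
        = ((l + 1 + d + 2).choose (l + 1) * (d + 1)) * (d - 1)‼ from by ring, key']
    ring

lemma term_split (k c j : ℕ) (hj : j ≤ k + 2) :
    (if (k+2) % 2 = j % 2 then
       (k+2).choose j * (k+2*c+2).choose j * j ! * (k+2 - j - 1)‼ * (k+2*c+2 - j - 1)‼ else 0)
  = (k+1) * (if k % 2 = j % 2 then
       k.choose j * (k+2*c+2).choose j * j ! * (k - j - 1)‼ * (k+2*c+2 - j - 1)‼ else 0)
  + (if j = 0 then 0 else (k+2*c+2) * (if (k+1) % 2 = (j-1) % 2 then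
       (k+1).choose (j-1) * (k+2*c+1).choose (j-1) * (j-1)! * (k+1 - (j-1) - 1)‼ * (k+2*c+1 - (j-1) - 1)‼ else 0)) := by
  by_cases hpar : (k+2) % 2 = j % 2
  · rw [if_pos hpar, if_pos (show k % 2 = j % 2 by omega)]
    rcases Nat.eq_zero_or_pos j with rfl | hj0
    · rw [if_pos rfl]
      simp only [Nat.choose_zero_right, Nat.factorial_zero, Nat.sub_zero,
        show k + 2 - 1 = k + 1 by omega, Nat.doubleFactorial_add_one, Nat.add_zero]
      ring
    · obtain ⟨l, rfl⟩ : ∃ l, j = l + 1 := ⟨j - 1, by omega⟩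
      rw [if_neg (Nat.succ_ne_zero l), if_pos (show (k+1) % 2 = (l+1-1) % 2 by omega)]
      have habs : (k+2*c+2) * ((k+2*c+1).choose l * l !) = (k+2*c+2).choose (l+1) * (l+1)! := by
        have h2 := Nat.add_one_mul_choose_eq (k+2*c+1) l
        rw [show k+2*c+1+1 = k+2*c+2 from rfl] at h2
        rw [Nat.factorial_succ]
        calc (k+2*c+2) * ((k+2*c+1).choose l * l !)
            = ((k+2*c+2) * (k+2*c+1).choose l) * l ! := by ring
          _ = ((k+2*c+2).choose (l+1) * (l+1)) * l ! := by rw [h2]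
          _ = (k+2*c+2).choose (l+1) * ((l+1) * l !) := by ring
      have hcore := core (k+2) (l+1) (by omega) (by omega) hpar
      rw [show k+2 - (l+1) - 1 = k - l by omega, show k+2 - (l+1) - 3 = k - l - 2 by omega,
        show k+2 - 1 = k + 1 by omega, show k+2 - 2 = k by omega,
        show l+1-1 = l by omega] at hcore
      rw [show l+1-1 = l by omega, show k+2 - (l+1) - 1 = k - l by omega,
        show k - (l+1) - 1 = k - l - 2 by omega,
        show k+1 - l - 1 = k - l by omega,
        show k+2*c+2 - (l+1) - 1 = k+2*c - l by omega,
        show k+2*c+1 - l - 1 = k+2*c - l by omega]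
      calc (k+2).choose (l+1) * (k+2*c+2).choose (l+1) * (l+1)! * (k-l)‼ * (k+2*c-l)‼
          = ((k+2).choose (l+1) * (k-l)‼) * ((k+2*c+2).choose (l+1) * (l+1)! * (k+2*c-l)‼) := by ring
        _ = ((k+1) * k.choose (l+1) * (k-l-2)‼ + (k+1).choose l * (k-l)‼) *
              ((k+2*c+2).choose (l+1) * (l+1)! * (k+2*c-l)‼) := by rw [hcore]
        _ = (k+1) * (k.choose (l+1) * (k+2*c+2).choose (l+1) * (l+1)! * (k-l-2)‼ * (k+2*c-l)‼)
            + (k+1).choose l * ((k+2*c+2).choose (l+1) * (l+1)!) * ((k-l)‼ * (k+2*c-l)‼) := by ring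
        _ = (k+1) * (k.choose (l+1) * (k+2*c+2).choose (l+1) * (l+1)! * (k-l-2)‼ * (k+2*c-l)‼)
            + (k+1).choose l * ((k+2*c+2) * ((k+2*c+1).choose l * l !)) * ((k-l)‼ * (k+2*c-l)‼) := by rw [habs]
        _ = _ := by ring
  · rw [if_neg hpar, if_neg (show ¬ k % 2 = j % 2 by omega)]
    rcases Nat.eq_zero_or_pos j with rfl | hj0
    · simp
    · rw [if_neg (by omega), if_neg (show ¬ (k+1) % 2 = (j-1) % 2 by omega)]
      simp

lemma aux : ∀ i n : ℕ, i ≤ n →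
    (∑ j ∈ Finset.range (i + 1),
        if i % 2 = j % 2 then
          (i.choose j) * ((2 * n - i).choose j) * (j !) *
            ((i - j - 1)‼) * ((2 * n - i - j - 1)‼)
        else 0) = (2 * n - 1)‼ := by
  intro i
  induction i using Nat.strong_induction_on with
  | _ i ih =>
    obtain _ | _ | k := i
    · intro n _
      simp
    · intro n h1
      obtain ⟨m, rfl⟩ : ∃ m, n = m + 1 := ⟨n - 1, by omega⟩
      rw [Finset.sum_range_succ, Finset.sum_range_one]
      norm_num
      rw [show 2 * (m+1) - 1 = 2*m + 1 by omega,
        show 2*m + 1 - 1 - 1 = 2*m - 1 by omega, Nat.doubleFactorial_add_one]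
    · intro n h
      obtain ⟨c, rfl⟩ : ∃ c, n = k + c + 2 := ⟨n - k - 2, by omega⟩
      have e1 : 2 * (k + c + 2) - (k + 2) = k + 2*c + 2 := by omega
      have e2 : 2 * (k + c + 2) - 1 = 2*k + 2*c + 3 := by omega
      rw [e2]
      calc (∑ j ∈ Finset.range (k + 2 + 1),
            if (k+2) % 2 = j % 2 then
              ((k+2).choose j) * ((2 * (k+c+2) - (k+2)).choose j) * (j !) *
                ((k+2 - j - 1)‼) * ((2 * (k+c+2) - (k+2) - j - 1)‼)
            else 0)
          = ∑ j ∈ Finset.range (k + 3),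
              ((k+1) * (if k % 2 = j % 2 then
                k.choose j * (k+2*c+2).choose j * j ! * (k - j - 1)‼ * (k+2*c+2 - j - 1)‼ else 0)
              + (if j = 0 then 0 else (k+2*c+2) * (if (k+1) % 2 = (j-1) % 2 then
                (k+1).choose (j-1) * (k+2*c+1).choose (j-1) * (j-1)! * (k+1 - (j-1) - 1)‼ * (k+2*c+1 - (j-1) - 1)‼ else 0))) := by
            refine Finset.sum_congr rfl fun j hj => ?_
            rw [e1]
            exact term_split k c j (by have := Finset.mem_range.mp hj; omega)
        _ = (k+1) * (2*k + 2*c + 1)‼ + (k+2*c+2) * (2*k + 2*c + 1)‼ := by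
            rw [Finset.sum_add_distrib, ← Finset.mul_sum]
            congr 1
            · -- first sum: drop top two terms, apply ih at (k, k+c+1)
              congr 1
              have ih1 := ih k (by omega) (k + c + 1) (by omega)
              rw [show 2 * (k + c + 1) - k = k + 2*c + 2 by omega,
                show 2 * (k + c + 1) - 1 = 2*k + 2*c + 1 by omega] at ih1
              rw [show k + 3 = (k + 2) + 1 from rfl, Finset.sum_range_succ, Finset.sum_range_succ,
                if_neg (show ¬ k % 2 = (k+1) % 2 by omega),
                if_pos (show k % 2 = (k+2) % 2 by omega),
                Nat.choose_eq_zero_of_lt (show k < k + 2 by omega)]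
              simpa using ih1
            · -- second sum: reindex
              rw [show k + 3 = (k + 2) + 1 from rfl, Finset.sum_range_succ']
              simp only [Nat.add_sub_cancel, if_neg (Nat.succ_ne_zero _), if_pos rfl, Nat.add_zero,
                ← Finset.mul_sum]
              have ih2 := ih (k+1) (by omega) (k + c + 1) (by omega)
              rw [show 2 * (k + c + 1) - (k+1) = k + 2*c + 1 by omega,
                show 2 * (k + c + 1) - 1 = 2*k + 2*c + 1 by omega] at ih2
              rw [ih2]
              simp
        _ = (2*k + 2*c + 3)‼ := by
            rw [show 2*k + 2*c + 3 = (2*k + 2*c + 1) + 2 from by ring, Nat.doubleFactorial_add_two]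
            ring

/-- row sums of the even winding matrix `A_{2n}` equal `(2n-1)!!`. -/
theorem stmt_2 (n i : ℕ) (hi : i ≤ n) :
    (∑ j ∈ Finset.range (i + 1),
        if i % 2 = j % 2 then
          (i.choose j) * ((2 * n - i).choose j) * (j !) *
            ((i - j - 1)‼) * ((2 * n - i - j - 1)‼)
        else 0) = (2 * n - 1)‼ := by
  exact aux i n hi
end

section
/- For odd m = 2n+1 and any 0 ≤ i ≤ n, the sum over j from 0 to i of a^{(m)}_{i,j} equals (2n+1)!!, where a^{(m)}_{i,j} = C(i,j)·C(2n+1−i,j)·j!·(i−j−1)!!·(2n+1−i−j)!! if i ≡ j (mod 2), and C(i,j)·C(2n+1−i,j)·j!·(i−j)!!·(2n−i−j)!! otherwise. -/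
open Nat Finset

private lemma dfac_succ' (d : ℕ) : (d+1)‼ = (d+1) * ((d-1)‼) := by
  match d with
  | 0 => rfl
  | (e+1) => rfl

private lemma mul_choose' (mm j : ℕ) : (mm+1) * mm.choose j = (mm+1).choose j * (mm+1-j) := by
  rw [Nat.add_one_mul_choose_eq, Nat.choose_succ_right_eq]

/-- summand of the row sum -/
private def T (n i j : ℕ) : ℕ :=
  if i % 2 = j % 2 then
    (i.choose j) * ((2 * n + 1 - i).choose j) * (j !) * ((i - j - 1)‼) * ((2 * n + 1 - i - j)‼)
  else
    (i.choose j) * ((2 * n + 1 - i).choose j) * (j !) * ((i - j)‼) * ((2 * n - i - j)‼)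

private def U (n i j : ℕ) : ℕ :=
  if i % 2 = j % 2 then
    (i.choose j) * ((2 * n + 1 - i).choose j) * (j !) * ((i - j - 1)‼) * ((2 * n + 1 - i - j)‼)
  else 0

private lemma caseA (j d m : ℕ) :
    (j+d+2*m+3) * ((j+d+1).choose j * ((j+d+2*m+2).choose j) * j ! * ((d+1)‼) * ((d+2*m+1)‼))
    = (j+d+1) * ((j+d).choose j * ((j+d+2*m+3).choose j) * j ! * ((d-1)‼) * ((d+2*m+3)‼)) := by
  have h1 : (j+d+1) * (j+d).choose j = (j+d+1).choose j * (d+1) := by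
    have h := mul_choose' (j+d) j
    rwa [show j+d+1-j = d+1 by omega] at h
  have h2 : (j+d+2*m+3) * (j+d+2*m+2).choose j = (j+d+2*m+3).choose j * (d+2*m+3) := by
    have h := mul_choose' (j+d+2*m+2) j
    rwa [show j+d+2*m+2+1-j = d+2*m+3 by omega, show j+d+2*m+2+1 = j+d+2*m+3 by omega] at h
  have h3 : (d+1)‼ = (d+1) * ((d-1)‼) := dfac_succ' d
  have h4 : (d+2*m+3)‼ = (d+2*m+3) * ((d+2*m+1)‼) := by
    have h := dfac_succ' (d+2*m+2)
    rwa [show d+2*m+2+1 = d+2*m+3 by omega, show d+2*m+2-1 = d+2*m+1 by omega] at h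
  rw [h3, h4]
  calc (j+d+2*m+3) * ((j+d+1).choose j * ((j+d+2*m+2).choose j) * j ! * ((d+1) * ((d-1)‼)) * ((d+2*m+1)‼))
      = ((j+d+1).choose j * (d+1)) * (((j+d+2*m+3) * (j+d+2*m+2).choose j)) * (j ! * ((d-1)‼) * ((d+2*m+1)‼)) := by ring
    _ = ((j+d+1) * (j+d).choose j) * ((j+d+2*m+3).choose j * (d+2*m+3)) * (j ! * ((d-1)‼) * ((d+2*m+1)‼)) := by rw [h1, h2]
    _ = (j+d+1) * ((j+d).choose j * ((j+d+2*m+3).choose j) * j ! * ((d-1)‼) * ((d+2*m+3) * ((d+2*m+1)‼))) := by ring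

private lemma caseB (k d m : ℕ) :
    (k+d+2*m+3) * ((k+d+1).choose (k+1) * ((k+d+2*m+2).choose (k+1)) * (k+1)! * ((d-1)‼) * ((d+2*m+1)‼))
    = (k+d+2*m+3) * ((k+d).choose (k+1) * ((k+d+2*m+3).choose (k+1)) * (k+1)! * ((d-1)‼) * ((d+2*m+1)‼))
    + (2*m+2) * ((k+d).choose k * ((k+d+2*m+3).choose k) * k ! * ((d-1)‼) * ((d+2*m+3)‼)) := by
  have h1 : (k+d).choose (k+1) * (k+1) = (k+d).choose k * d := by
    have h := Nat.choose_succ_right_eq (k+d) k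
    rwa [show k+d-k = d by omega] at h
  have h2 : (k+d+2*m+3).choose (k+1) * (k+1) = (k+d+2*m+3).choose k * (d+2*m+3) := by
    have h := Nat.choose_succ_right_eq (k+d+2*m+3) k
    rwa [show k+d+2*m+3-k = d+2*m+3 by omega] at h
  have h3 : (k+d+1).choose (k+1) = (k+d).choose k + (k+d).choose (k+1) :=
    Nat.choose_succ_succ (k+d) k
  have h4 : (k+d+2*m+3) * (k+d+2*m+2).choose (k+1) = (k+d+2*m+3).choose (k+1) * (d+2*m+2) := by
    have h := mul_choose' (k+d+2*m+2) (k+1)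
    rwa [show k+d+2*m+2+1-(k+1) = d+2*m+2 by omega, show k+d+2*m+2+1 = k+d+2*m+3 by omega] at h
  have h5 : (d+2*m+3)‼ = (d+2*m+3) * ((d+2*m+1)‼) := by
    have h := dfac_succ' (d+2*m+2)
    rwa [show d+2*m+2+1 = d+2*m+3 by omega, show d+2*m+2-1 = d+2*m+1 by omega] at h
  have h6 : (k+1)! = (k+1) * k ! := Nat.factorial_succ k
  rw [h5, h6]
  apply Nat.eq_of_mul_eq_mul_left (show 0 < k+1 by omega)
  zify
  zify at h1 h2 h3 h4
  set A := ((k+d).choose k : ℤ)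
  set A' := ((k+d).choose (k+1) : ℤ)
  set B := ((k+d+2*m+3).choose k : ℤ)
  set B' := ((k+d+2*m+3).choose (k+1) : ℤ)
  set C1 := ((k+d+1).choose (k+1) : ℤ)
  set C2 := ((k+d+2*m+2).choose (k+1) : ℤ)
  set W := ((k ! : ℤ) * ((d-1)‼ : ℤ) * (((d+2*m+1)‼ : ℕ) : ℤ)) with hW
  linear_combination (-((k:ℤ)+1)^2*B'*W) * h1
    + (A*(((d:ℤ)+2*m+2)*(k+1+d)-((k:ℤ)+d+2*m+3)*d)*W) * h2
    + (((k:ℤ)+1)^2*((k:ℤ)+d+2*m+3)*C2*W) * h3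
    + (((k:ℤ)+1)^2*(A+A')*W) * h4

private lemma step (n i j : ℕ) (hi : i + 1 ≤ n) (hj : j ≤ i + 1) :
    (2*n+1-i) * T n (i+1) j + (2*n-2*i) * U n i j
      = (2*n+1-i) * T n i j + (2*n-2*i) * (if j = 0 then 0 else U n i (j-1)) := by
  rcases eq_or_ne (i % 2) (j % 2) with h | h
  · -- parity equal : j ≤ i
    have hj' : j ≤ i := by omega
    have hrhs0 : (if j = 0 then 0 else U n i (j-1)) = 0 := by
      rcases Nat.eq_zero_or_pos j with h0 | h0
      · simp [h0]
      · rw [if_neg (by omega)]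
        simp only [U]
        rw [if_neg (by omega)]
    rw [hrhs0, mul_zero, add_zero]
    simp only [T, U]
    rw [if_neg (by omega), if_pos h, if_pos h]
    obtain ⟨d, rfl⟩ : ∃ d, i = j + d := ⟨i - j, by omega⟩
    obtain ⟨m, rfl⟩ : ∃ m, n = j + d + m + 1 := ⟨n - (j+d) - 1, by omega⟩
    rw [show 2*(j+d+m+1)+1-(j+d) = j+d+2*m+3 by omega,
        show 2*(j+d+m+1)+1-(j+d+1) = j+d+2*m+2 by omega,
        show j+d+1-j = d+1 by omega,
        show 2*(j+d+m+1)-(j+d+1)-j = d+2*m+1 by omega,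
        show j+d-j-1 = d-1 by omega,
        show j+d+2*m+3-j = d+2*m+3 by omega,
        show 2*(j+d+m+1)-2*(j+d) = 2*m+2 by omega]
    have hA := caseA j d m
    zify at hA ⊢
    linear_combination hA
  · -- parity different
    rcases j with _ | k
    · -- j = 0, i odd
      simp only [if_pos rfl, mul_zero, add_zero]
      have hU : U n i 0 = 0 := by simp only [U]; rw [if_neg h]
      rw [hU, mul_zero, add_zero]
      simp only [T]
      rw [if_pos (by omega), if_neg h]
      rw [show 2*n+1-(i+1) = 2*n-i by omega, show i+1-0-1 = i-0 by omega,
          show 2*n-i-0 = 2*n+1-(i+1)-0 by omega]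
      simp
    · -- j = k+1
      rw [if_neg (by omega)]
      have hUj : U n i (k+1) = 0 := by simp only [U]; rw [if_neg h]
      rw [hUj, mul_zero, add_zero]
      simp only [T, U, Nat.add_sub_cancel]
      rw [if_pos (by omega), if_neg h, if_pos (by omega)]
      obtain ⟨d, rfl⟩ : ∃ d, i = k + d := ⟨i - k, by omega⟩
      obtain ⟨m, rfl⟩ : ∃ m, n = k + d + m + 1 := ⟨n - (k+d) - 1, by omega⟩
      rw [show 2*(k+d+m+1)+1-(k+d) = k+d+2*m+3 by omega,
          show 2*(k+d+m+1)+1-(k+d+1) = k+d+2*m+2 by omega,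
          show k+d+1-(k+1)-1 = d-1 by omega,
          show k+d+2*m+2-(k+1) = d+2*m+1 by omega,
          show k+d-(k+1) = d-1 by omega,
          show 2*(k+d+m+1)-(k+d)-(k+1) = d+2*m+1 by omega,
          show k+d-k-1 = d-1 by omega,
          show k+d+2*m+3-k = d+2*m+3 by omega,
          show 2*(k+d+m+1)-2*(k+d) = 2*m+2 by omega]
      exact caseB k d m

private lemma sum_T (n i : ℕ) (hi : i ≤ n) :
    ∑ j ∈ Finset.range (i + 1), T n i j = (2 * n + 1)‼ := by
  induction i with
  | zero =>
    simp only [Finset.sum_range_one, T]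
    norm_num
  | succ i ih =>
    have hi' : i ≤ n := le_of_succ_le hi
    rw [← ih hi']
    apply Nat.eq_of_mul_eq_mul_left (show 0 < 2*n+1-i by omega)
    have H : ∑ j ∈ Finset.range (i+1+1), ((2*n+1-i) * T n (i+1) j + (2*n-2*i) * U n i j)
        = ∑ j ∈ Finset.range (i+1+1),
            ((2*n+1-i) * T n i j + (2*n-2*i) * (if j = 0 then 0 else U n i (j-1))) :=
      Finset.sum_congr rfl fun j hj =>
        step n i j hi (by have := Finset.mem_range.mp hj; omega)
    rw [Finset.sum_add_distrib, Finset.sum_add_distrib, ← Finset.mul_sum, ← Finset.mul_sum,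
        ← Finset.mul_sum, ← Finset.mul_sum] at H
    have fU : ∑ j ∈ Finset.range (i+1+1), U n i j = ∑ j ∈ Finset.range (i+1), U n i j := by
      rw [Finset.sum_range_succ]
      have : U n i (i+1) = 0 := by simp only [U]; rw [if_neg (by omega)]
      rw [this, add_zero]
    have fV : ∑ j ∈ Finset.range (i+1+1), (if j = 0 then 0 else U n i (j-1))
        = ∑ j ∈ Finset.range (i+1), U n i j := by
      rw [Finset.sum_range_succ']
      simp
    have fT : ∑ j ∈ Finset.range (i+1+1), T n i j = ∑ j ∈ Finset.range (i+1), T n i j := by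
      rw [Finset.sum_range_succ]
      have : T n i (i+1) = 0 := by
        simp only [T, Nat.choose_succ_self]
        split <;> simp
      rw [this, add_zero]
    rw [fU, fV, fT] at H
    omega

/-- row sums of the odd winding matrix `A_{2n+1}` equal `(2n+1)!!`. -/
theorem stmt_3 (n i : ℕ) (hi : i ≤ n) :
    (∑ j ∈ Finset.range (i + 1),
        if i % 2 = j % 2 then
          (i.choose j) * ((2 * n + 1 - i).choose j) * (j !) *
            ((i - j - 1)‼) * ((2 * n + 1 - i - j)‼)
        else
          (i.choose j) * ((2 * n + 1 - i).choose j) * (j !) *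
            ((i - j)‼) * ((2 * n - i - j)‼)) = (2 * n + 1)‼ := by
  have h := sum_T n i hi
  simpa only [T] using h
end

section
/- Fix m ∈ ℕ and let n = ⌊m/2⌋. For 0 ≤ k ≤ n define the vector v_k ∈ ℝ^{n+1} by (v_k)_i = C(m−2k, i−k) for 0 ≤ i ≤ n (binomial coefficient, 0 if i < k or i−k > m−2k). Then for each 0 ≤ k ≤ n and all 0 ≤ i ≤ n: i·(m−i)·(v_k)_i = (m−2k)·(m−2k−1)·(v_{k+1})_i + k·(m−k)·(v_k)_i, where v_{n+1} is interpreted as the zero vector if needed, and all scalar coefficients appearing are nonnegative. -/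
/-- The generator vectors `v_k ∈ ℝ^{n+1}` with `(v_k)_i = C(m-2k, i-k)`
(zero when `i < k`; the binomial itself vanishes when `i - k > m - 2k`). -/
noncomputable def vgen (m k i : ℕ) : ℝ :=
  if k ≤ i then ((m - 2 * k).choose (i - k) : ℝ) else 0

lemma aux_choose (a j : ℕ) (hj : 1 ≤ j) :
    j * (a - j) * a.choose j = a * (a - 1) * (a - 2).choose (j - 1) := by
  match a, j, hj with
  | 0, j, hj => simp
  | 1, (c+1), hj =>
      have h0 : 1 - (c + 1) = 0 := by omega
      simp [h0]
  | (b+2), (c+1), hj =>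
      have h1 : (b + 2) * (b + 1).choose c = (b + 2).choose (c + 1) * (c + 1) :=
        Nat.add_one_mul_choose_eq (b+1) c
      have h2 : (b + 1) * b.choose c = (b + 1).choose (c + 1) * (c + 1) :=
        Nat.add_one_mul_choose_eq b c
      have h3 : (b + 1).choose (c + 1) * (c + 1) = (b + 1).choose c * (b + 1 - c) :=
        Nat.choose_succ_right_eq (b+1) c
      have hs : b + 2 - (c + 1) = b + 1 - c := by omega
      have hsub : (b + 2) - 1 = b + 1 := rfl
      have hsub2 : (b + 2) - 2 = b := rfl
      have hsub3 : (c + 1) - 1 = c := rfl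
      rw [hs, hsub, hsub2, hsub3]
      calc (c + 1) * (b + 1 - c) * (b + 2).choose (c + 1)
          = (b + 1 - c) * ((b + 2).choose (c + 1) * (c + 1)) := by ring
        _ = (b + 1 - c) * ((b + 2) * (b + 1).choose c) := by rw [h1]
        _ = (b + 2) * ((b + 1).choose c * (b + 1 - c)) := by ring
        _ = (b + 2) * ((b + 1).choose (c + 1) * (c + 1)) := by rw [h3]
        _ = (b + 2) * ((b + 1) * b.choose c) := by rw [h2]
        _ = (b + 2) * (b + 1) * b.choose c := by ring

/-- the recurrence
`i(m-i)·(v_k)_i = (m-2k)(m-2k-1)·(v_{k+1})_i + k(m-k)·(v_k)_i`,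
for all `0 ≤ k ≤ n` and `0 ≤ i ≤ n` with `n = ⌊m/2⌋`, and the scalar
coefficients appearing are nonnegative. -/
theorem stmt_8 (m k i : ℕ) (hk : k ≤ m / 2) (hi : i ≤ m / 2) :
    ((i : ℝ) * ((m : ℝ) - i) * vgen m k i =
        ((m : ℝ) - 2 * k) * ((m : ℝ) - 2 * k - 1) * vgen m (k + 1) i +
          (k : ℝ) * ((m : ℝ) - k) * vgen m k i) ∧
      0 ≤ ((m : ℝ) - 2 * k) * ((m : ℝ) - 2 * k - 1) ∧
      0 ≤ (k : ℝ) * ((m : ℝ) - k) := by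
  have h2k : 2 * k ≤ m := by omega
  have hkm : k ≤ m := by omega
  refine ⟨?_, ?_, ?_⟩
  · rcases lt_trichotomy i k with h | h | h
    · -- i < k : both vgen vanish
      rw [vgen, vgen, if_neg (by omega), if_neg (by omega)]
      ring
    · -- i = k
      subst h
      rw [vgen, vgen, if_pos le_rfl, if_neg (by omega)]
      simp [Nat.sub_self]
    · -- k < i
      have h2k2 : 2 * k + 2 ≤ m := by omega
      have hik : i + k ≤ m := by omega
      rw [vgen, vgen, if_pos (by omega), if_pos (by omega)]
      have key := aux_choose (m - 2 * k) (i - k) (by omega)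
      have e1 : m - 2 * k - (i - k) = m - k - i := by omega
      have e2 : m - 2 * k - 2 = m - 2 * (k + 1) := by omega
      have e3 : i - k - 1 = i - (k + 1) := by omega
      rw [e1, e2, e3] at key
      have keyR : ((i : ℝ) - k) * ((m : ℝ) - k - i) * ((m - 2 * k).choose (i - k) : ℝ)
          = ((m : ℝ) - 2 * k) * ((m : ℝ) - 2 * k - 1) *
            ((m - 2 * (k + 1)).choose (i - (k + 1)) : ℝ) := by
        have := congrArg (fun n : ℕ => (n : ℝ)) key
        push_cast [Nat.cast_sub (by omega : k ≤ i), Nat.cast_sub (by omega : i ≤ m - k),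
          Nat.cast_sub (by omega : k ≤ m), Nat.cast_sub h2k,
          Nat.cast_sub (by omega : 1 ≤ m - 2 * k)] at this
        convert this using 2 <;> push_cast <;> ring
      linear_combination keyR
  · rcases eq_or_lt_of_le h2k with h | h
    · have : ((m : ℝ) - 2 * k) = 0 := by
        have : (m : ℝ) = 2 * k := by exact_mod_cast h.symm
        linarith
      rw [this]; ring_nf; exact le_refl 0
    · have h1 : (2 * k + 1 : ℕ) ≤ m := h
      have : (2 * (k : ℝ) + 1) ≤ m := by exact_mod_cast h1
      nlinarith
  · have : (k : ℝ) ≤ m := by exact_mod_cast hkm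
    exact mul_nonneg (Nat.cast_nonneg k) (by linarith)
end

section
/- Let Γ be a graph with edge set E and let L(Γ) be its line graph (vertices are edges of Γ; two are adjacent iff the edges share an endpoint). Then for all β, ν ∈ ℝ, the Ising partition function Z_{β,ν}(L(Γ)) = Σ_{σ: E → {0,1}} Π_{v ∈ V(Γ)} exp(β·s_v(σ)·(d(v) − s_v(σ)) + (ν/2)·s_v(σ)), where d(v) is the degree of v in Γ and s_v(σ) = Σ_{e ∋ v} σ(e) is the number of edges incident to v assigned spin 1. -/
open Finset

/-- The Ising edge weight `exp (β |σ(i) - σ(j)|)` as a function of an unordered pair. -/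
noncomputable def isingEdgeWeight {W : Type*} (β : ℝ) (σ : W → Bool) : Sym2 W → ℝ :=
  Sym2.lift ⟨fun i j =>
      Real.exp (β * |(if σ i then (1 : ℝ) else 0) - (if σ j then (1 : ℝ) else 0)|),
    by intro i j; simp only []; rw [abs_sub_comm]⟩

open Classical in
/-- The Ising partition function `Z_{β,ν}(H)` of a finite graph `H`. -/
noncomputable def isingZ {W : Type*} [Fintype W] (H : SimpleGraph W) (β ν : ℝ) : ℝ :=
  ∑ σ : W → Bool,
    (∏ e ∈ H.edgeFinset, isingEdgeWeight β σ e) *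
      ∏ k : W, Real.exp (ν * (if σ k then 1 else 0))

/-- The line graph of `Γ`: vertices are the edges of `Γ`, adjacent when the
corresponding edges of `Γ` are distinct and share an endpoint. -/
def lineGraph {V : Type*} (Γ : SimpleGraph V) : SimpleGraph Γ.edgeSet where
  Adj e f := e ≠ f ∧ ∃ v : V, v ∈ e.1 ∧ v ∈ f.1
  symm := by
    constructor
    rintro e f ⟨hne, v, hv, hv'⟩
    exact ⟨hne.symm, v, hv', hv⟩
  loopless := by constructor; rintro e ⟨hne, -⟩; exact hne rfl

open Classical in
/-- The number of edges incident to `v` which are assigned spin `1` by `σ`. -/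
noncomputable def sOnes {V : Type*} [Fintype V] (Γ : SimpleGraph V)
    (v : V) (σ : Γ.edgeSet → Bool) : ℕ :=
  (Finset.univ.filter fun e : Γ.edgeSet => v ∈ e.1 ∧ σ e = true).card

/-! For a fixed spin assignment `σ` on the edges of `Γ`, the interaction energy on `L(Γ)` counts
pairs of adjacent edges with different spins. Since `Γ` is simple, such a pair shares exactly one
vertex `v`, where it is one of the `s_v (d(v) - s_v)` pairs formed by a spin-1 and a spin-0 edge
at `v`. The field term counts spin-1 edges, and each of them is seen at both of its endpoints, so
that count is `(∑_v s_v) / 2`. -/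

theorem isingEdgeWeight_eq_exp {W : Type*} (β : ℝ) (σ : W → Bool) (e : Sym2 W) :
    isingEdgeWeight β σ e = Real.exp (β * if (e.map σ).IsDiag then 0 else 1) := by
  induction e using Sym2.ind with
  | _ i j => cases hi : σ i <;> cases hj : σ j <;> simp [isingEdgeWeight, hi, hj]

theorem prod_isingEdgeWeight {W : Type*} (β : ℝ) (σ : W → Bool) (S : Finset (Sym2 W)) :
    ∏ e ∈ S, isingEdgeWeight β σ e = Real.exp (β * #{e ∈ S | ¬(e.map σ).IsDiag}) := by
  simp_rw [isingEdgeWeight_eq_exp, ← Real.exp_sum, ← mul_sum, card_filter,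
    Nat.cast_sum, apply_ite Nat.cast, Nat.cast_zero, Nat.cast_one, ite_not]

theorem prod_exp_mul_spin {W : Type*} [Fintype W] (ν : ℝ) (σ : W → Bool) :
    ∏ k, Real.exp (ν * if σ k then 1 else 0) = Real.exp (ν * #{k | σ k}) := by
  simp_rw [← Real.exp_sum, ← mul_sum, card_filter, Nat.cast_sum,
    apply_ite Nat.cast, Nat.cast_zero, Nat.cast_one]

section LineGraph

open Classical

variable {V : Type*} [Fintype V] (Γ : SimpleGraph V) (σ : Γ.edgeSet → Bool)

theorem card_incident_eq_degree (v : V) : #{e : Γ.edgeSet | v ∈ e.1} = Γ.degree v := by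
  rw [← Γ.card_incidenceFinset_eq_degree, Γ.incidenceFinset_eq_filter]
  refine card_nbij (·.1) (fun e he => by simpa using he) Subtype.val_injective.injOn
    fun e he => ?_
  simp only [coe_filter, SimpleGraph.mem_edgeFinset] at he
  exact ⟨⟨e, he.1⟩, by simpa using he.2, rfl⟩

theorem sOnes_add_card_spin_false (v : V) :
    sOnes Γ v σ + #{e : Γ.edgeSet | v ∈ e.1 ∧ σ e = false} = Γ.degree v := by
  rw [← card_incident_eq_degree,
    ← card_filter_add_card_filter_not (s := {e : Γ.edgeSet | v ∈ e.1}) (fun e => σ e = true),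
    filter_filter, filter_filter, sOnes]
  simp only [Bool.not_eq_true]

theorem sum_sOnes : ∑ v, sOnes Γ v σ = 2 * #{e | σ e} := by
  simp_rw [sOnes, card_filter]
  rw [sum_comm, mul_sum]
  refine sum_congr rfl fun e _ => ?_
  cases σ e
  · simp
  · have hcard : #{v | v ∈ e.1} = 2 :=
      calc #{v | v ∈ e.1} = #e.1.toFinset := by congr 1; ext v; simp
        _ = 2 := Sym2.card_toFinset_of_not_isDiag e.1 (Γ.not_isDiag_of_mem_edgeSet e.2)
    simpa [← card_filter] using hcard

theorem card_disagreeing_lineGraph_edges :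
    #{ε ∈ (lineGraph Γ).edgeFinset | ¬(ε.map σ).IsDiag} =
      ∑ v, sOnes Γ v σ * #{e : Γ.edgeSet | v ∈ e.1 ∧ σ e = false} := by
  simp_rw [sOnes, ← card_product]
  rw [← card_sigma]
  symm
  refine card_bij (fun p _ => s(p.2.1, p.2.2)) ?_ ?_ ?_
  · rintro ⟨v, e, f⟩ h
    simp only [mem_sigma, mem_univ, mem_product, mem_filter, true_and] at h
    obtain ⟨⟨hve, hse⟩, hvf, hsf⟩ := h
    have hsef : σ e ≠ σ f := by simp [hse, hsf]
    simp only [mem_filter, SimpleGraph.mem_edgeFinset, SimpleGraph.mem_edgeSet, Sym2.map_mk,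
      Sym2.mk_isDiag_iff]
    exact ⟨⟨ne_of_apply_ne σ hsef, v, hve, hvf⟩, hsef⟩
  · rintro ⟨v, e, f⟩ h ⟨v', e', f'⟩ h' heq
    simp only [mem_sigma, mem_univ, mem_product, mem_filter, true_and] at h h'
    rw [Sym2.eq_iff] at heq
    rcases heq with ⟨rfl, rfl⟩ | ⟨rfl, rfl⟩
    · -- two distinct edges of a simple graph share at most one endpoint
      by_contra hne
      have hvv : v ≠ v' := fun h => hne (by rw [h])
      have hef : e = f := Subtype.ext <|
        ((Sym2.mem_and_mem_iff hvv).1 ⟨h.1.1, h'.1.1⟩).trans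
          ((Sym2.mem_and_mem_iff hvv).1 ⟨h.2.1, h'.2.1⟩).symm
      simp_all
    · simp_all
  · intro ε hε
    induction ε using Sym2.ind with
    | _ e f =>
      simp only [mem_filter, SimpleGraph.mem_edgeFinset, SimpleGraph.mem_edgeSet, Sym2.map_mk,
        Sym2.mk_isDiag_iff] at hε
      obtain ⟨⟨-, v, hve, hvf⟩, hsef⟩ := hε
      cases hse : σ e
      · exact ⟨⟨v, f, e⟩, by simp_all, Sym2.eq_swap⟩
      · exact ⟨⟨v, e, f⟩, by simp_all, rfl⟩

end LineGraph

open Classical in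
/-- the Ising partition function on the line graph `L(Γ)` equals the
holant expression `∑_{σ : E → {0,1}} ∏_{v} exp (β s_v (d(v) - s_v) + (ν/2) s_v)`. -/
theorem stmt_13 {V : Type*} [Fintype V] (Γ : SimpleGraph V) (β ν : ℝ) :
    isingZ (lineGraph Γ) β ν =
      ∑ σ : Γ.edgeSet → Bool,
        ∏ v : V,
          Real.exp (β * (sOnes Γ v σ) * ((Γ.degree v : ℝ) - (sOnes Γ v σ))
            + (ν / 2) * (sOnes Γ v σ)) := by
  refine sum_congr (by congr!) fun σ _ => ?_
  have hdeg (v : V) :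
      (Γ.degree v : ℝ) - sOnes Γ v σ = #{e : Γ.edgeSet | v ∈ e.1 ∧ σ e = false} := by
    rw [← sOnes_add_card_spin_false Γ σ v]; push_cast; ring
  have hspins : (#{e | σ e} : ℝ) = (∑ v, sOnes Γ v σ : ℕ) / 2 := by
    rw [sum_sOnes]; push_cast; ring
  rw [prod_isingEdgeWeight, prod_exp_mul_spin, ← Real.exp_add, ← Real.exp_sum,
    card_disagreeing_lineGraph_edges, hspins]
  congr 1
  simp_rw [mul_assoc, hdeg, sum_add_distrib, ← mul_sum]
  push_cast
  ring
end
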